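/- Let λ, σ, ν, θ > 0, τ > 0, h > 0, t ≥ τ. Let X¹, X², Z¹, Z² be four centered, square-integrable real processes indexed by [0,∞), pairwise uncorrelated, with Cov(X^k_s, X^k_t) = (σ²/(2λ))·exp(−λ|s−t|) and Cov(Z^k_s, Z^k_t) = min(s,t) for k = 1,2. For ε ∈ ℝ and k = 1,2 define r^k(ε) = θ(X^k_{t+h} − X^k_t) + ν(Z^k_{t+h} − Z^k_t) + ε·Σ_{j=1,2}[θ((X^j_{t+h} − X^j_t) − (X^j_{t+h−τ} − X^j_{t−τ})) + ν((Z^j_{t+h} − Z^j_t) − (Z^j_{t+h−τ} − Z^j_{t−τ}))], and for ε in a punctured neighbourhood of 0 let ρ_ε(h) = Cov(r¹(ε), r²(ε))/√(Var(r¹(ε))·Var(r²(ε))). Then, as ε → 0 (ε ≠ 0), ρ_ε(h)/(2ε) converges to [θ²·(1 − e^{−λh} − e^{−λτ} + ½e^{−λ(h+τ)} + ½e^{−λ|h−τ|}) + ξ·min(h,τ)] / [θ²·(1 − e^{−λh}) + ξh], where ξ = ν²λ/σ². -/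

import Mathlib

open MeasureTheory Filter

/-- Covariance of two real random variables. -/
noncomputable def cov {Ω : Type*} [MeasurableSpace Ω] (μ : Measure Ω) (X Y : Ω → ℝ) : ℝ :=
  (∫ ω, X ω * Y ω ∂μ) - (∫ ω, X ω ∂μ) * (∫ ω, Y ω ∂μ)

/-- The momentum term `V = θ((X_{t+h} − X_t) − (X_{t+h−τ} − X_{t−τ}))
  + ν((Z_{t+h} − Z_t) − (Z_{t+h−τ} − Z_{t−τ}))` of a process pair `(X, Z)`. -/
def momTerm {Ω : Type*} (th nu τ h t : ℝ) (X Z : ℝ → Ω → ℝ) : Ω → ℝ :=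
  fun ω => th * ((X (t + h) ω - X t ω) - (X (t + h - τ) ω - X (t - τ) ω))
    + nu * ((Z (t + h) ω - Z t ω) - (Z (t + h - τ) ω - Z (t - τ) ω))

/-- The `h`-horizon return of asset `k` (with own noises `X`, `Z`) to first order in the
coupling `ε`: `r(ε) = θ(X_{t+h} − X_t) + ν(Z_{t+h} − Z_t) + ε(V¹ + V²)`. -/
def ret {Ω : Type*} (th nu eps τ h t : ℝ) (X Z X1 X2 Z1 Z2 : ℝ → Ω → ℝ) : Ω → ℝ :=
  fun ω => th * (X (t + h) ω - X t ω) + nu * (Z (t + h) ω - Z t ω)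
    + eps * (momTerm th nu τ h t X1 Z1 ω + momTerm th nu τ h t X2 Z2 ω)

/-!
To first order in `ε` the return of asset `k` is `rᵏ = Aᵏ_t + ε S`, where `Aᵏ_s` is the
uncoupled `h`-return started at `s` and `S = Σⱼ (Aʲ_t − Aʲ_{t−τ})` is the momentum signal. The
uncoupled returns of the two assets are uncorrelated and, since the noises have stationary
increments, share one autocovariance function `γ`. Hence `Cov(Aᵏ_t, S) = γ 0 − γ τ =: c` and
`Var S = 4c`, so `Cov(r¹, r²) = (2ε + 4ε²) c` and `Var rᵏ = γ 0 + (2ε + 4ε²) c`: the correlation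
divided by `2ε` tends to `c / γ 0`, which is the displayed ratio after factoring out `σ²/λ`.
-/

open ProbabilityTheory Topology Real

section Covariance

variable {Ω : Type*} [MeasurableSpace Ω] {μ : Measure Ω}

lemma cov_comm (X Y : Ω → ℝ) : cov μ X Y = cov μ Y X := by
  simp only [cov, mul_comm (X _), mul_comm (∫ ω, X ω ∂μ)]

variable [IsProbabilityMeasure μ]

lemma cov_eq_covariance {X Y : Ω → ℝ} (hX : MemLp X 2 μ) (hY : MemLp Y 2 μ) :
    cov μ X Y = cov[X, Y; μ] :=
  (covariance_eq_sub hX hY).symm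

lemma covariance_eq_of_cov {X Y : ℝ → Ω → ℝ} {C : ℝ → ℝ → ℝ}
    (hX : ∀ s, 0 ≤ s → MemLp (X s) 2 μ) (hY : ∀ s, 0 ≤ s → MemLp (Y s) 2 μ)
    (hC : ∀ s u, 0 ≤ s → 0 ≤ u → cov μ (X s) (Y u) = C s u) {s u : ℝ} (hs : 0 ≤ s)
    (hu : 0 ≤ u) : cov[X s, Y u; μ] = C s u := by
  rw [← cov_eq_covariance (hX s hs) (hY u hu), hC s u hs hu]

lemma covariance_add_smul_add_smul {P P' S : Ω → ℝ} (hP : MemLp P 2 μ) (hP' : MemLp P' 2 μ)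
    (hS : MemLp S 2 μ) (ε : ℝ) :
    cov[P + ε • S, P' + ε • S; μ]
      = cov[P, P'; μ] + ε * (cov[P, S; μ] + cov[S, P'; μ]) + ε ^ 2 * cov[S, S; μ] := by
  rw [covariance_add_left hP (hS.const_smul ε) (hP'.add (hS.const_smul ε)),
    covariance_add_right hP hP' (hS.const_smul ε),
    covariance_add_right (hS.const_smul ε) hP' (hS.const_smul ε),
    covariance_smul_left, covariance_smul_left, covariance_smul_right, covariance_smul_right]
  ring

end Covariance

lemma min_increments_eq_max_sub_abs {h : ℝ} (hh : 0 ≤ h) (s u : ℝ) :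
    min (s + h) (u + h) - min (s + h) u - min s (u + h) + min s u = max 0 (h - |s - u|) := by
  rcases le_total s u with hsu | hus
  · rw [abs_of_nonpos (sub_nonpos.2 hsu)]
    simp only [min_def, max_def]
    split_ifs <;> linarith
  · rw [abs_of_nonneg (sub_nonneg.2 hus)]
    simp only [min_def, max_def]
    split_ifs <;> linarith

section BaseReturn

variable {Ω : Type*} [MeasurableSpace Ω] {μ : Measure Ω} {X Y Z W : ℝ → Ω → ℝ} {h s u : ℝ}

/-- The return over `[s, s + h]` when there is no momentum trading (`ε = 0`). -/
def baseReturn (th nu h : ℝ) (X Z : ℝ → Ω → ℝ) (s : ℝ) : Ω → ℝ :=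
  th • (X (s + h) - X s) + nu • (Z (s + h) - Z s)

lemma memLp_increment (hX : ∀ s, 0 ≤ s → MemLp (X s) 2 μ) (hh : 0 ≤ h) (hs : 0 ≤ s) :
    MemLp (X (s + h) - X s) 2 μ :=
  (hX _ (add_nonneg hs hh)).sub (hX s hs)

lemma memLp_baseReturn (th nu : ℝ) (hX : ∀ s, 0 ≤ s → MemLp (X s) 2 μ)
    (hZ : ∀ s, 0 ≤ s → MemLp (Z s) 2 μ) (hh : 0 ≤ h) (hs : 0 ≤ s) :
    MemLp (baseReturn th nu h X Z s) 2 μ :=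
  ((memLp_increment hX hh hs).const_smul th).add ((memLp_increment hZ hh hs).const_smul nu)

variable [IsProbabilityMeasure μ]

lemma covariance_increment_increment {C : ℝ → ℝ → ℝ}
    (hX : ∀ s, 0 ≤ s → MemLp (X s) 2 μ) (hY : ∀ s, 0 ≤ s → MemLp (Y s) 2 μ)
    (hC : ∀ s u, 0 ≤ s → 0 ≤ u → cov μ (X s) (Y u) = C s u) (hh : 0 ≤ h) (hs : 0 ≤ s)
    (hu : 0 ≤ u) :
    cov[X (s + h) - X s, Y (u + h) - Y u; μ]
      = C (s + h) (u + h) - C (s + h) u - C s (u + h) + C s u := by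
  have hsh : 0 ≤ s + h := add_nonneg hs hh
  have huh : 0 ≤ u + h := add_nonneg hu hh
  rw [covariance_sub_sub (hX _ hsh) (hX s hs) (hY _ huh) (hY u hu)]
  simp only [covariance_eq_of_cov hX hY hC, hs, hu, hsh, huh]

lemma covariance_baseReturn (th nu : ℝ) (hX : ∀ s, 0 ≤ s → MemLp (X s) 2 μ)
    (hY : ∀ s, 0 ≤ s → MemLp (Y s) 2 μ) (hZ : ∀ s, 0 ≤ s → MemLp (Z s) 2 μ)
    (hW : ∀ s, 0 ≤ s → MemLp (W s) 2 μ) (hh : 0 ≤ h) (hs : 0 ≤ s) (hu : 0 ≤ u) :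
    cov[baseReturn th nu h X Z s, baseReturn th nu h Y W u; μ]
      = th ^ 2 * cov[X (s + h) - X s, Y (u + h) - Y u; μ]
        + th * nu * (cov[X (s + h) - X s, W (u + h) - W u; μ]
          + cov[Z (s + h) - Z s, Y (u + h) - Y u; μ])
        + nu ^ 2 * cov[Z (s + h) - Z s, W (u + h) - W u; μ] := by
  have hX' := (memLp_increment hX hh hs).const_smul th
  have hZ' := (memLp_increment hZ hh hs).const_smul nu
  have hY' := (memLp_increment hY hh hu).const_smul th
  have hW' := (memLp_increment hW hh hu).const_smul nu
  rw [baseReturn, baseReturn, covariance_add_left hX' hZ' (hY'.add hW'),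
    covariance_add_right hX' hY' hW', covariance_add_right hZ' hY' hW']
  simp only [covariance_smul_left, covariance_smul_right]
  ring

noncomputable def returnAutocov (lam sig nu th h d : ℝ) : ℝ :=
  th ^ 2 * (sig ^ 2 / (2 * lam)) *
      (2 * exp (-(lam * |d|)) - exp (-(lam * |d + h|)) - exp (-(lam * |d - h|)))
    + nu ^ 2 * max 0 (h - |d|)

lemma covariance_baseReturn_self (lam sig nu th : ℝ) (hX : ∀ s, 0 ≤ s → MemLp (X s) 2 μ)
    (hZ : ∀ s, 0 ≤ s → MemLp (Z s) 2 μ)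
    (hXcov : ∀ s u, 0 ≤ s → 0 ≤ u →
      cov μ (X s) (X u) = sig ^ 2 / (2 * lam) * exp (-(lam * |s - u|)))
    (hZcov : ∀ s u, 0 ≤ s → 0 ≤ u → cov μ (Z s) (Z u) = min s u)
    (hXZ : ∀ s u, 0 ≤ s → 0 ≤ u → cov μ (X s) (Z u) = 0) (hh : 0 ≤ h) (hs : 0 ≤ s)
    (hu : 0 ≤ u) :
    cov[baseReturn th nu h X Z s, baseReturn th nu h X Z u; μ]
      = returnAutocov lam sig nu th h (s - u) := by
  have hZX : ∀ s u, 0 ≤ s → 0 ≤ u → cov μ (Z s) (X u) = 0 := fun s u hs hu =>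
    (cov_comm _ _).trans (hXZ u s hu hs)
  rw [covariance_baseReturn th nu hX hX hZ hZ hh hs hu,
    covariance_increment_increment hX hX hXcov hh hs hu,
    covariance_increment_increment hX hZ hXZ hh hs hu,
    covariance_increment_increment hZ hX hZX hh hs hu,
    covariance_increment_increment hZ hZ hZcov hh hs hu,
    min_increments_eq_max_sub_abs hh, returnAutocov,
    show s + h - (u + h) = s - u by ring, show s + h - u = s - u + h by ring,
    show s - (u + h) = s - u - h by ring]
  ring

lemma covariance_baseReturn_eq_zero (th nu : ℝ) (hX : ∀ s, 0 ≤ s → MemLp (X s) 2 μ)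
    (hY : ∀ s, 0 ≤ s → MemLp (Y s) 2 μ) (hZ : ∀ s, 0 ≤ s → MemLp (Z s) 2 μ)
    (hW : ∀ s, 0 ≤ s → MemLp (W s) 2 μ)
    (hXY : ∀ s u, 0 ≤ s → 0 ≤ u → cov μ (X s) (Y u) = 0)
    (hXW : ∀ s u, 0 ≤ s → 0 ≤ u → cov μ (X s) (W u) = 0)
    (hYZ : ∀ s u, 0 ≤ s → 0 ≤ u → cov μ (Y s) (Z u) = 0)
    (hZW : ∀ s u, 0 ≤ s → 0 ≤ u → cov μ (Z s) (W u) = 0) (hh : 0 ≤ h) (hs : 0 ≤ s)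
    (hu : 0 ≤ u) :
    cov[baseReturn th nu h X Z s, baseReturn th nu h Y W u; μ] = 0 := by
  have hZY : ∀ s u, 0 ≤ s → 0 ≤ u → cov μ (Z s) (Y u) = 0 := fun s u hs hu =>
    (cov_comm _ _).trans (hYZ u s hu hs)
  rw [covariance_baseReturn th nu hX hY hZ hW hh hs hu,
    covariance_increment_increment hX hY hXY hh hs hu,
    covariance_increment_increment hX hW hXW hh hs hu,
    covariance_increment_increment hZ hY hZY hh hs hu,
    covariance_increment_increment hZ hW hZW hh hs hu]
  ring

end BaseReturn

section Momentum

variable {Ω : Type*} [MeasurableSpace Ω] {μ : Measure Ω} [IsProbabilityMeasure μ]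
  {A A₁ A₂ : ℝ → Ω → ℝ} {γ : ℝ → ℝ} {τ t : ℝ}

def momentumSignal (A₁ A₂ : ℝ → Ω → ℝ) (τ t : ℝ) : Ω → ℝ :=
  (A₁ t - A₁ (t - τ)) + (A₂ t - A₂ (t - τ))

omit [MeasurableSpace Ω] in
lemma momentumSignal_comm (A₁ A₂ : ℝ → Ω → ℝ) (τ t : ℝ) :
    momentumSignal A₁ A₂ τ t = momentumSignal A₂ A₁ τ t :=
  add_comm _ _

omit [IsProbabilityMeasure μ] in
lemma memLp_momentumSignal (hA₁ : ∀ s, 0 ≤ s → MemLp (A₁ s) 2 μ)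
    (hA₂ : ∀ s, 0 ≤ s → MemLp (A₂ s) 2 μ) (hτ : 0 ≤ τ) (ht : τ ≤ t) :
    MemLp (momentumSignal A₁ A₂ τ t) 2 μ :=
  ((hA₁ t (hτ.trans ht)).sub (hA₁ _ (sub_nonneg.2 ht))).add
    ((hA₂ t (hτ.trans ht)).sub (hA₂ _ (sub_nonneg.2 ht)))

lemma covariance_sub_lag (hA : ∀ s, 0 ≤ s → MemLp (A s) 2 μ)
    (hγ : ∀ s u, 0 ≤ s → 0 ≤ u → cov[A s, A u; μ] = γ (s - u)) (hτ : 0 ≤ τ) (ht : τ ≤ t) :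
    cov[A t, A t - A (t - τ); μ] = γ 0 - γ τ ∧
      cov[A t - A (t - τ), A t - A (t - τ); μ] = 2 * (γ 0 - γ τ) := by
  have h0 : 0 ≤ t := hτ.trans ht
  have h1 : 0 ≤ t - τ := sub_nonneg.2 ht
  have hlag : cov[A (t - τ), A t; μ] = γ τ := by
    rw [covariance_comm, hγ _ _ h0 h1, sub_sub_cancel]
  rw [covariance_sub_right (hA t h0) (hA t h0) (hA _ h1),
    covariance_sub_sub (hA t h0) (hA _ h1) (hA t h0) (hA _ h1), hlag,
    hγ _ _ h0 h0, hγ _ _ h0 h1, hγ _ _ h1 h1]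
  simp only [sub_self, sub_sub_cancel, true_and]
  ring

lemma covariance_momentumSignal_left (hA₁ : ∀ s, 0 ≤ s → MemLp (A₁ s) 2 μ)
    (hA₂ : ∀ s, 0 ≤ s → MemLp (A₂ s) 2 μ)
    (hγ₁ : ∀ s u, 0 ≤ s → 0 ≤ u → cov[A₁ s, A₁ u; μ] = γ (s - u))
    (h₁₂ : ∀ s u, 0 ≤ s → 0 ≤ u → cov[A₁ s, A₂ u; μ] = 0) (hτ : 0 ≤ τ) (ht : τ ≤ t) :
    cov[A₁ t, momentumSignal A₁ A₂ τ t; μ] = γ 0 - γ τ := by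
  have h0 : 0 ≤ t := hτ.trans ht
  have h1 : 0 ≤ t - τ := sub_nonneg.2 ht
  rw [momentumSignal, covariance_add_right (hA₁ t h0) ((hA₁ t h0).sub (hA₁ _ h1))
      ((hA₂ t h0).sub (hA₂ _ h1)),
    covariance_sub_right (hA₁ t h0) (hA₂ t h0) (hA₂ _ h1), h₁₂ _ _ h0 h0, h₁₂ _ _ h0 h1,
    (covariance_sub_lag hA₁ hγ₁ hτ ht).1]
  ring

lemma covariance_momentumSignal_self (hA₁ : ∀ s, 0 ≤ s → MemLp (A₁ s) 2 μ)
    (hA₂ : ∀ s, 0 ≤ s → MemLp (A₂ s) 2 μ)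
    (hγ₁ : ∀ s u, 0 ≤ s → 0 ≤ u → cov[A₁ s, A₁ u; μ] = γ (s - u))
    (hγ₂ : ∀ s u, 0 ≤ s → 0 ≤ u → cov[A₂ s, A₂ u; μ] = γ (s - u))
    (h₁₂ : ∀ s u, 0 ≤ s → 0 ≤ u → cov[A₁ s, A₂ u; μ] = 0) (hτ : 0 ≤ τ) (ht : τ ≤ t) :
    cov[momentumSignal A₁ A₂ τ t, momentumSignal A₁ A₂ τ t; μ] = 4 * (γ 0 - γ τ) := by
  have h0 : 0 ≤ t := hτ.trans ht
  have h1 : 0 ≤ t - τ := sub_nonneg.2 ht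
  have hV₁ := (hA₁ t h0).sub (hA₁ _ h1)
  have hV₂ := (hA₂ t h0).sub (hA₂ _ h1)
  have hV₁₂ : cov[A₁ t - A₁ (t - τ), A₂ t - A₂ (t - τ); μ] = 0 := by
    rw [covariance_sub_sub (hA₁ t h0) (hA₁ _ h1) (hA₂ t h0) (hA₂ _ h1), h₁₂ _ _ h0 h0,
      h₁₂ _ _ h0 h1, h₁₂ _ _ h1 h0, h₁₂ _ _ h1 h1]
    ring
  rw [momentumSignal, covariance_add_left hV₁ hV₂ (hV₁.add hV₂),
    covariance_add_right hV₁ hV₁ hV₂, covariance_add_right hV₂ hV₁ hV₂,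
    covariance_comm (A₂ t - _), hV₁₂, (covariance_sub_lag hA₁ hγ₁ hτ ht).2,
    (covariance_sub_lag hA₂ hγ₂ hτ ht).2]
  ring

theorem covariance_momentum_returns (hA₁ : ∀ s, 0 ≤ s → MemLp (A₁ s) 2 μ)
    (hA₂ : ∀ s, 0 ≤ s → MemLp (A₂ s) 2 μ)
    (hγ₁ : ∀ s u, 0 ≤ s → 0 ≤ u → cov[A₁ s, A₁ u; μ] = γ (s - u))
    (hγ₂ : ∀ s u, 0 ≤ s → 0 ≤ u → cov[A₂ s, A₂ u; μ] = γ (s - u))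
    (h₁₂ : ∀ s u, 0 ≤ s → 0 ≤ u → cov[A₁ s, A₂ u; μ] = 0) (hτ : 0 ≤ τ) (ht : τ ≤ t)
    (ε : ℝ) :
    cov[A₁ t + ε • momentumSignal A₁ A₂ τ t, A₂ t + ε • momentumSignal A₁ A₂ τ t; μ]
      = (2 * ε + 4 * ε ^ 2) * (γ 0 - γ τ) := by
  have h0 : 0 ≤ t := hτ.trans ht
  have h₂₁ : ∀ s u, 0 ≤ s → 0 ≤ u → cov[A₂ s, A₁ u; μ] = 0 := fun s u hs hu => by
    rw [covariance_comm, h₁₂ u s hu hs]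
  rw [covariance_add_smul_add_smul (hA₁ t h0) (hA₂ t h0) (memLp_momentumSignal hA₁ hA₂ hτ ht),
    h₁₂ t t h0 h0, covariance_momentumSignal_left hA₁ hA₂ hγ₁ h₁₂ hτ ht,
    covariance_momentumSignal_self hA₁ hA₂ hγ₁ hγ₂ h₁₂ hτ ht, covariance_comm _ (A₂ t),
    momentumSignal_comm, covariance_momentumSignal_left hA₂ hA₁ hγ₂ h₂₁ hτ ht]
  ring

theorem covariance_momentum_return_self (hA₁ : ∀ s, 0 ≤ s → MemLp (A₁ s) 2 μ)
    (hA₂ : ∀ s, 0 ≤ s → MemLp (A₂ s) 2 μ)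
    (hγ₁ : ∀ s u, 0 ≤ s → 0 ≤ u → cov[A₁ s, A₁ u; μ] = γ (s - u))
    (hγ₂ : ∀ s u, 0 ≤ s → 0 ≤ u → cov[A₂ s, A₂ u; μ] = γ (s - u))
    (h₁₂ : ∀ s u, 0 ≤ s → 0 ≤ u → cov[A₁ s, A₂ u; μ] = 0) (hτ : 0 ≤ τ) (ht : τ ≤ t)
    (ε : ℝ) :
    cov[A₁ t + ε • momentumSignal A₁ A₂ τ t, A₁ t + ε • momentumSignal A₁ A₂ τ t; μ]
      = γ 0 + (2 * ε + 4 * ε ^ 2) * (γ 0 - γ τ) := by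
  have h0 : 0 ≤ t := hτ.trans ht
  rw [covariance_add_smul_add_smul (hA₁ t h0) (hA₁ t h0) (memLp_momentumSignal hA₁ hA₂ hτ ht),
    hγ₁ t t h0 h0, sub_self, covariance_comm _ (A₁ t),
    covariance_momentumSignal_left hA₁ hA₂ hγ₁ h₁₂ hτ ht,
    covariance_momentumSignal_self hA₁ hA₂ hγ₁ hγ₂ h₁₂ hτ ht]
  ring

theorem covariance_momentum_return_self_right (hA₁ : ∀ s, 0 ≤ s → MemLp (A₁ s) 2 μ)
    (hA₂ : ∀ s, 0 ≤ s → MemLp (A₂ s) 2 μ)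
    (hγ₁ : ∀ s u, 0 ≤ s → 0 ≤ u → cov[A₁ s, A₁ u; μ] = γ (s - u))
    (hγ₂ : ∀ s u, 0 ≤ s → 0 ≤ u → cov[A₂ s, A₂ u; μ] = γ (s - u))
    (h₁₂ : ∀ s u, 0 ≤ s → 0 ≤ u → cov[A₁ s, A₂ u; μ] = 0) (hτ : 0 ≤ τ) (ht : τ ≤ t)
    (ε : ℝ) :
    cov[A₂ t + ε • momentumSignal A₁ A₂ τ t, A₂ t + ε • momentumSignal A₁ A₂ τ t; μ]
      = γ 0 + (2 * ε + 4 * ε ^ 2) * (γ 0 - γ τ) := by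
  rw [momentumSignal_comm]
  exact covariance_momentum_return_self hA₂ hA₁ hγ₂ hγ₁
    (fun s u hs hu => by rw [covariance_comm, h₁₂ u s hu hs]) hτ ht ε

end Momentum

lemma returnAutocov_zero {lam sig : ℝ} (hlam : lam ≠ 0) (hsig : sig ≠ 0) (nu th : ℝ) {h : ℝ}
    (hh : 0 ≤ h) :
    returnAutocov lam sig nu th h 0
      = sig ^ 2 / lam * (th ^ 2 * (1 - exp (-(lam * h))) + nu ^ 2 * lam / sig ^ 2 * h) := by
  rw [returnAutocov, abs_zero, mul_zero, neg_zero, exp_zero, zero_add, zero_sub, abs_neg,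
    abs_of_nonneg hh, sub_zero, max_eq_right hh]
  field_simp
  ring

lemma returnAutocov_zero_sub_returnAutocov {lam sig : ℝ} (hlam : lam ≠ 0) (hsig : sig ≠ 0)
    (nu th : ℝ) {h τ : ℝ} (hh : 0 ≤ h) (hτ : 0 ≤ τ) :
    returnAutocov lam sig nu th h 0 - returnAutocov lam sig nu th h τ
      = sig ^ 2 / lam *
        (th ^ 2 * (1 - exp (-(lam * h)) - exp (-(lam * τ)) + 1 / 2 * exp (-(lam * (h + τ)))
            + 1 / 2 * exp (-(lam * |h - τ|)))
          + nu ^ 2 * lam / sig ^ 2 * min h τ) := by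
  have hmin : h - max 0 (h - τ) = min h τ := by
    simp only [min_def, max_def]
    split_ifs <;> linarith
  rw [returnAutocov_zero hlam hsig nu th hh, returnAutocov, abs_of_nonneg hτ,
    abs_of_nonneg (add_nonneg hτ hh), abs_sub_comm τ h, add_comm τ h, ← hmin]
  field_simp
  ring

lemma tendsto_correlation_div_two_mul {v c : ℝ} (hv : 0 < v) :
    Tendsto (fun ε : ℝ => (2 * ε + 4 * ε ^ 2) * c
        / √((v + (2 * ε + 4 * ε ^ 2) * c) * (v + (2 * ε + 4 * ε ^ 2) * c)) / (2 * ε))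
      (𝓝[≠] 0) (𝓝 (c / v)) := by
  have hden : Tendsto (fun ε : ℝ => v + (2 * ε + 4 * ε ^ 2) * c) (𝓝[≠] 0) (𝓝 v) := by
    have : Continuous fun ε : ℝ => v + (2 * ε + 4 * ε ^ 2) * c := by fun_prop
    simpa using this.continuousAt.tendsto.mono_left (nhdsWithin_le_nhds (a := (0 : ℝ)))
  have hnum : Tendsto (fun ε : ℝ => (1 + 2 * ε) * c) (𝓝[≠] 0) (𝓝 c) := by
    have : Continuous fun ε : ℝ => (1 + 2 * ε) * c := by fun_prop
    simpa using this.continuousAt.tendsto.mono_left (nhdsWithin_le_nhds (a := (0 : ℝ)))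
  refine (hnum.div hden hv.ne').congr' ?_
  filter_upwards [hden.eventually (lt_mem_nhds hv), self_mem_nhdsWithin] with ε hpos hε
  rw [Pi.div_apply, Real.sqrt_mul_self hpos.le]
  field_simp [show ε ≠ 0 from hε]
  ring

lemma returnAutocov_zero_pos {lam sig nu : ℝ} (hlam : 0 < lam) (hsig : sig ≠ 0) (hnu : nu ≠ 0)
    (th : ℝ) {h : ℝ} (hh : 0 < h) : 0 < returnAutocov lam sig nu th h 0 := by
  rw [returnAutocov_zero hlam.ne' hsig nu th hh.le]
  have : 0 ≤ 1 - exp (-(lam * h)) :=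
    sub_nonneg.2 (exp_le_one_iff.2 (neg_nonpos.2 (mul_pos hlam hh).le))
  positivity

lemma ret_eq {Ω : Type*} (th nu eps τ h t : ℝ) (X Z X1 X2 Z1 Z2 : ℝ → Ω → ℝ) :
    ret th nu eps τ h t X Z X1 X2 Z1 Z2 = baseReturn th nu h X Z t
      + eps • momentumSignal (baseReturn th nu h X1 Z1) (baseReturn th nu h X2 Z2) τ t := by
  funext ω
  simp only [ret, momTerm, momentumSignal, baseReturn, sub_add_eq_add_sub, Pi.add_apply,
    Pi.sub_apply, Pi.smul_apply, smul_eq_mul]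
  ring

theorem cross_correlation_tendsto_general {Ω : Type*} [MeasurableSpace Ω] (μ : Measure Ω)
    [IsProbabilityMeasure μ]
    (lam sig nu th τ h t : ℝ)
    (hlam : 0 < lam) (hsig : 0 < sig) (hnu : 0 < nu)
    (hτ : 0 < τ) (hh : 0 < h) (ht : τ ≤ t)
    (X1 X2 Z1 Z2 : ℝ → Ω → ℝ)
    (hX1L2 : ∀ s : ℝ, 0 ≤ s → MemLp (X1 s) 2 μ)
    (hX2L2 : ∀ s : ℝ, 0 ≤ s → MemLp (X2 s) 2 μ)
    (hZ1L2 : ∀ s : ℝ, 0 ≤ s → MemLp (Z1 s) 2 μ)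
    (hZ2L2 : ∀ s : ℝ, 0 ≤ s → MemLp (Z2 s) 2 μ)
    (hX1cov : ∀ s u : ℝ, 0 ≤ s → 0 ≤ u →
      cov μ (X1 s) (X1 u) = sig ^ 2 / (2 * lam) * Real.exp (-(lam * |s - u|)))
    (hX2cov : ∀ s u : ℝ, 0 ≤ s → 0 ≤ u →
      cov μ (X2 s) (X2 u) = sig ^ 2 / (2 * lam) * Real.exp (-(lam * |s - u|)))
    (hZ1cov : ∀ s u : ℝ, 0 ≤ s → 0 ≤ u → cov μ (Z1 s) (Z1 u) = min s u)
    (hZ2cov : ∀ s u : ℝ, 0 ≤ s → 0 ≤ u → cov μ (Z2 s) (Z2 u) = min s u)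
    (hX1X2 : ∀ s u : ℝ, 0 ≤ s → 0 ≤ u → cov μ (X1 s) (X2 u) = 0)
    (hX1Z1 : ∀ s u : ℝ, 0 ≤ s → 0 ≤ u → cov μ (X1 s) (Z1 u) = 0)
    (hX1Z2 : ∀ s u : ℝ, 0 ≤ s → 0 ≤ u → cov μ (X1 s) (Z2 u) = 0)
    (hX2Z1 : ∀ s u : ℝ, 0 ≤ s → 0 ≤ u → cov μ (X2 s) (Z1 u) = 0)
    (hX2Z2 : ∀ s u : ℝ, 0 ≤ s → 0 ≤ u → cov μ (X2 s) (Z2 u) = 0)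
    (hZ1Z2 : ∀ s u : ℝ, 0 ≤ s → 0 ≤ u → cov μ (Z1 s) (Z2 u) = 0) :
    Tendsto
      (fun eps : ℝ =>
        cov μ (ret th nu eps τ h t X1 Z1 X1 X2 Z1 Z2) (ret th nu eps τ h t X2 Z2 X1 X2 Z1 Z2)
          / Real.sqrt
              (cov μ (ret th nu eps τ h t X1 Z1 X1 X2 Z1 Z2)
                  (ret th nu eps τ h t X1 Z1 X1 X2 Z1 Z2) *
                cov μ (ret th nu eps τ h t X2 Z2 X1 X2 Z1 Z2)
                  (ret th nu eps τ h t X2 Z2 X1 X2 Z1 Z2))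
          / (2 * eps))
      (nhdsWithin 0 {0}ᶜ)
      (nhds
        ((th ^ 2 *
              (1 - Real.exp (-(lam * h)) - Real.exp (-(lam * τ))
                + (1 / 2) * Real.exp (-(lam * (h + τ)))
                + (1 / 2) * Real.exp (-(lam * |h - τ|)))
            + nu ^ 2 * lam / sig ^ 2 * min h τ)
          / (th ^ 2 * (1 - Real.exp (-(lam * h))) + nu ^ 2 * lam / sig ^ 2 * h))) := by
  simp only [ret_eq]
  set A₁ := baseReturn th nu h X1 Z1
  set A₂ := baseReturn th nu h X2 Z2
  set γ := returnAutocov lam sig nu th h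
  have hA₁ : ∀ s, 0 ≤ s → MemLp (A₁ s) 2 μ := fun s => memLp_baseReturn th nu hX1L2 hZ1L2 hh.le
  have hA₂ : ∀ s, 0 ≤ s → MemLp (A₂ s) 2 μ := fun s => memLp_baseReturn th nu hX2L2 hZ2L2 hh.le
  have hγ₁ : ∀ s u, 0 ≤ s → 0 ≤ u → cov[A₁ s, A₁ u; μ] = γ (s - u) := fun s u =>
    covariance_baseReturn_self lam sig nu th hX1L2 hZ1L2 hX1cov hZ1cov hX1Z1 hh.le
  have hγ₂ : ∀ s u, 0 ≤ s → 0 ≤ u → cov[A₂ s, A₂ u; μ] = γ (s - u) := fun s u =>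
    covariance_baseReturn_self lam sig nu th hX2L2 hZ2L2 hX2cov hZ2cov hX2Z2 hh.le
  have h₁₂ : ∀ s u, 0 ≤ s → 0 ≤ u → cov[A₁ s, A₂ u; μ] = 0 := fun s u =>
    covariance_baseReturn_eq_zero th nu hX1L2 hX2L2 hZ1L2 hZ2L2 hX1X2 hX1Z2 hX2Z1 hZ1Z2 hh.le
  have hr {A : ℝ → Ω → ℝ} (hA : ∀ s, 0 ≤ s → MemLp (A s) 2 μ) (ε : ℝ) :
      MemLp (A t + ε • momentumSignal A₁ A₂ τ t) 2 μ :=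
    (hA t (hτ.le.trans ht)).add ((memLp_momentumSignal hA₁ hA₂ hτ.le ht).const_smul ε)
  simp only [fun ε => cov_eq_covariance (hr hA₁ ε) (hr hA₂ ε),
    fun ε => cov_eq_covariance (hr hA₁ ε) (hr hA₁ ε),
    fun ε => cov_eq_covariance (hr hA₂ ε) (hr hA₂ ε),
    covariance_momentum_returns hA₁ hA₂ hγ₁ hγ₂ h₁₂ hτ.le ht,
    covariance_momentum_return_self hA₁ hA₂ hγ₁ hγ₂ h₁₂ hτ.le ht,
    covariance_momentum_return_self_right hA₁ hA₂ hγ₁ hγ₂ h₁₂ hτ.le ht]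
  have hK : sig ^ 2 / lam ≠ 0 := by positivity
  rw [← mul_div_mul_left _ _ hK,
    ← returnAutocov_zero_sub_returnAutocov hlam.ne' hsig.ne' nu th hh.le hτ.le,
    ← returnAutocov_zero hlam.ne' hsig.ne' nu th hh.le]
  exact tendsto_correlation_div_two_mul (returnAutocov_zero_pos hlam hsig.ne' hnu.ne' th hh)

/-- The asymptotic (small-`ε`) form of Theorem 3.1 of the paper: the cross-correlation
`ρ_ε(h)` of the two `h`-horizon returns satisfies
`ρ_ε(h)/(2ε) → [θ²(1 − e^{−λh} − e^{−λτ} + ½e^{−λ(h+τ)} + ½e^{−λ|h−τ|}) + ξ(h∧τ)]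
  / [θ²(1 − e^{−λh}) + ξh]` as `ε → 0`, `ε ≠ 0`, where `ξ = ν²λ/σ²`. -/
theorem cross_correlation_tendsto {Ω : Type*} [MeasurableSpace Ω] (μ : Measure Ω)
    [IsProbabilityMeasure μ]
    (lam sig nu th τ h t : ℝ)
    (hlam : 0 < lam) (hsig : 0 < sig) (hnu : 0 < nu) (hth : 0 < th)
    (hτ : 0 < τ) (hh : 0 < h) (ht : τ ≤ t)
    (X1 X2 Z1 Z2 : ℝ → Ω → ℝ)
    (hX1L2 : ∀ s : ℝ, 0 ≤ s → MemLp (X1 s) 2 μ)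
    (hX2L2 : ∀ s : ℝ, 0 ≤ s → MemLp (X2 s) 2 μ)
    (hZ1L2 : ∀ s : ℝ, 0 ≤ s → MemLp (Z1 s) 2 μ)
    (hZ2L2 : ∀ s : ℝ, 0 ≤ s → MemLp (Z2 s) 2 μ)
    (hX1cent : ∀ s : ℝ, 0 ≤ s → ∫ ω, X1 s ω ∂μ = 0)
    (hX2cent : ∀ s : ℝ, 0 ≤ s → ∫ ω, X2 s ω ∂μ = 0)
    (hZ1cent : ∀ s : ℝ, 0 ≤ s → ∫ ω, Z1 s ω ∂μ = 0)
    (hZ2cent : ∀ s : ℝ, 0 ≤ s → ∫ ω, Z2 s ω ∂μ = 0)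
    (hX1cov : ∀ s u : ℝ, 0 ≤ s → 0 ≤ u →
      cov μ (X1 s) (X1 u) = sig ^ 2 / (2 * lam) * Real.exp (-(lam * |s - u|)))
    (hX2cov : ∀ s u : ℝ, 0 ≤ s → 0 ≤ u →
      cov μ (X2 s) (X2 u) = sig ^ 2 / (2 * lam) * Real.exp (-(lam * |s - u|)))
    (hZ1cov : ∀ s u : ℝ, 0 ≤ s → 0 ≤ u → cov μ (Z1 s) (Z1 u) = min s u)
    (hZ2cov : ∀ s u : ℝ, 0 ≤ s → 0 ≤ u → cov μ (Z2 s) (Z2 u) = min s u)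
    (hX1X2 : ∀ s u : ℝ, 0 ≤ s → 0 ≤ u → cov μ (X1 s) (X2 u) = 0)
    (hX1Z1 : ∀ s u : ℝ, 0 ≤ s → 0 ≤ u → cov μ (X1 s) (Z1 u) = 0)
    (hX1Z2 : ∀ s u : ℝ, 0 ≤ s → 0 ≤ u → cov μ (X1 s) (Z2 u) = 0)
    (hX2Z1 : ∀ s u : ℝ, 0 ≤ s → 0 ≤ u → cov μ (X2 s) (Z1 u) = 0)
    (hX2Z2 : ∀ s u : ℝ, 0 ≤ s → 0 ≤ u → cov μ (X2 s) (Z2 u) = 0)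
    (hZ1Z2 : ∀ s u : ℝ, 0 ≤ s → 0 ≤ u → cov μ (Z1 s) (Z2 u) = 0) :
    Tendsto
      (fun eps : ℝ =>
        cov μ (ret th nu eps τ h t X1 Z1 X1 X2 Z1 Z2) (ret th nu eps τ h t X2 Z2 X1 X2 Z1 Z2)
          / Real.sqrt
              (cov μ (ret th nu eps τ h t X1 Z1 X1 X2 Z1 Z2)
                  (ret th nu eps τ h t X1 Z1 X1 X2 Z1 Z2) *
                cov μ (ret th nu eps τ h t X2 Z2 X1 X2 Z1 Z2)
                  (ret th nu eps τ h t X2 Z2 X1 X2 Z1 Z2))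
          / (2 * eps))
      (nhdsWithin 0 {0}ᶜ)
      (nhds
        ((th ^ 2 *
              (1 - Real.exp (-(lam * h)) - Real.exp (-(lam * τ))
                + (1 / 2) * Real.exp (-(lam * (h + τ)))
                + (1 / 2) * Real.exp (-(lam * |h - τ|)))
            + nu ^ 2 * lam / sig ^ 2 * min h τ)
          / (th ^ 2 * (1 - Real.exp (-(lam * h))) + nu ^ 2 * lam / sig ^ 2 * h))) :=
  cross_correlation_tendsto_general μ lam sig nu th τ h t hlam hsig hnu hτ hh ht X1 X2 Z1 Z2 hX1L2
    hX2L2 hZ1L2 hZ2L2 hX1cov hX2cov hZ1cov hZ2cov hX1X2 hX1Z1 hX1Z2 hX2Z1 hX2Z2 hZ1Z2
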